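/- arXiv:0907.5526 — 4 statements merged into one kernel-verified Lean document; each statement's English description precedes it below -/
import Mathlib

section
/- Let f : A → B be a differential homomorphism of Keigher rings and let 𝔭 be a prime differential ideal of A. Then the following are equivalent: (1) 𝔭^{ec} = 𝔭, i.e. f⁻¹(B·f(𝔭)) = 𝔭; (2) there exists a prime ideal 𝔮 of B with f⁻¹(𝔮) = 𝔭; (3) there exists a prime differential ideal 𝔮 of B with f⁻¹(𝔮) = 𝔭. -/
/-!
Common differential-algebra preamble.

A differential ring is a commutative ring `R` equipped with a family of derivations
`δ : ι → Derivation ℤ R R`.  Induced derivations on quotients by differential ideals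
and on localizations are unique (the canonical map is an epimorphism), which justifies
quantifying universally over derivation families commuting with the canonical map.
-/

universe u v

section Preamble

variable {ι : Type*}

/-- An ideal is a *differential ideal* with respect to a family of derivations. -/
def IsDiffIdeal {R : Type*} [CommRing R] (δ : ι → Derivation ℤ R R) (I : Ideal R) : Prop :=
  ∀ i : ι, ∀ x ∈ I, δ i x ∈ I

/-- A *Keigher ring*: the radical of any differential ideal is again differential. -/
def IsKeigher {R : Type*} [CommRing R] (δ : ι → Derivation ℤ R R) : Prop :=
  ∀ I : Ideal R, IsDiffIdeal δ I → IsDiffIdeal δ I.radical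

/-- A ring homomorphism is a *differential homomorphism* if it commutes with the
derivations. -/
def IsDiffHom {A B : Type*} [CommRing A] [CommRing B]
    (δA : ι → Derivation ℤ A A) (δB : ι → Derivation ℤ B B) (f : A →+* B) : Prop :=
  ∀ (i : ι) (a : A), f (δA i a) = δB i (f a)

theorem IsDiffHom.comp {A B C : Type*} [CommRing A] [CommRing B] [CommRing C]
    {δA : ι → Derivation ℤ A A} {δB : ι → Derivation ℤ B B} {δC : ι → Derivation ℤ C C}
    {f : A →+* B} {g : B →+* C} (hf : IsDiffHom δA δB f) (hg : IsDiffHom δB δC g) :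
    IsDiffHom δA δC (g.comp f) := fun i a => by
  simp only [RingHom.comp_apply, hf i a, hg i (f a)]

/-- Iterated application of the derivations along a list of indices. -/
def derivApply {B : Type*} [CommRing B] (δ : ι → Derivation ℤ B B) : List ι → B → B
  | [], b => b
  | i :: l, b => δ i (derivApply δ l b)

/-- `B` is *differentially finitely generated* over `A`: finitely many elements whose
iterated derivatives generate `B` as an `A`-algebra. -/
def IsDiffFG (A : Type*) {B : Type*} [CommRing A] [CommRing B] [Algebra A B]
    (δ : ι → Derivation ℤ B B) : Prop :=
  ∃ s : Finset B,
    Algebra.adjoin A {x : B | ∃ b ∈ s, ∃ l : List ι, derivApply δ l b = x} = ⊤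

/-- A differential ring is *differentially simple* if it is nonzero and its only
differential ideals are `⊥` and `⊤`. -/
def IsDiffSimple {R : Type*} [CommRing R] (δ : ι → Derivation ℤ R R) : Prop :=
  Nontrivial R ∧ ∀ I : Ideal R, IsDiffIdeal δ I → I = ⊥ ∨ I = ⊤

/-- The differential spectrum `Spec^Δ`, as a subspace of the prime spectrum. -/
def DiffSpec {R : Type*} [CommRing R] (δ : ι → Derivation ℤ R R) : Type _ :=
  {p : PrimeSpectrum R // IsDiffIdeal δ p.asIdeal}

instance {R : Type*} [CommRing R] (δ : ι → Derivation ℤ R R) :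
    TopologicalSpace (DiffSpec δ) :=
  inferInstanceAs (TopologicalSpace {p : PrimeSpectrum R // IsDiffIdeal δ p.asIdeal})

/-- The contraction map `f*_Δ : Spec^Δ B → Spec^Δ A` induced by a differential
homomorphism. -/
def diffComap {A B : Type*} [CommRing A] [CommRing B]
    {δA : ι → Derivation ℤ A A} {δB : ι → Derivation ℤ B B} {f : A →+* B}
    (hf : IsDiffHom δA δB f) (q : DiffSpec δB) : DiffSpec δA :=
  ⟨PrimeSpectrum.comap f q.1, fun i x hx => by
    have h : f x ∈ q.1.asIdeal := hx
    have hd := q.2 i (f x) h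
    show f (δA i x) ∈ q.1.asIdeal
    rw [hf i x]
    exact hd⟩

/-- Going-up property for prime ideals. -/
def HasGoingUp {A B : Type*} [CommRing A] [CommRing B] (f : A →+* B) : Prop :=
  ∀ p p' : Ideal A, p.IsPrime → p'.IsPrime → p ≤ p' →
    ∀ q : Ideal B, q.IsPrime → q.comap f = p →
      ∃ q' : Ideal B, q'.IsPrime ∧ q ≤ q' ∧ q'.comap f = p'

/-- Going-down property for prime ideals. -/
def HasGoingDown {A B : Type*} [CommRing A] [CommRing B] (f : A →+* B) : Prop :=
  ∀ p p' : Ideal A, p.IsPrime → p'.IsPrime → p' ≤ p →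
    ∀ q : Ideal B, q.IsPrime → q.comap f = p →
      ∃ q' : Ideal B, q'.IsPrime ∧ q' ≤ q ∧ q'.comap f = p'

/-- Going-up property for prime differential ideals. -/
def HasGoingUpDiff {A B : Type*} [CommRing A] [CommRing B]
    (δA : ι → Derivation ℤ A A) (δB : ι → Derivation ℤ B B) (f : A →+* B) : Prop :=
  ∀ p p' : Ideal A, p.IsPrime → IsDiffIdeal δA p → p'.IsPrime → IsDiffIdeal δA p' → p ≤ p' →
    ∀ q : Ideal B, q.IsPrime → IsDiffIdeal δB q → q.comap f = p →
      ∃ q' : Ideal B, q'.IsPrime ∧ IsDiffIdeal δB q' ∧ q ≤ q' ∧ q'.comap f = p'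

/-- Going-down property for prime differential ideals. -/
def HasGoingDownDiff {A B : Type*} [CommRing A] [CommRing B]
    (δA : ι → Derivation ℤ A A) (δB : ι → Derivation ℤ B B) (f : A →+* B) : Prop :=
  ∀ p p' : Ideal A, p.IsPrime → IsDiffIdeal δA p → p'.IsPrime → IsDiffIdeal δA p' → p' ≤ p →
    ∀ q : Ideal B, q.IsPrime → IsDiffIdeal δB q → q.comap f = p →
      ∃ q' : Ideal B, q'.IsPrime ∧ IsDiffIdeal δB q' ∧ q' ≤ q ∧ q'.comap f = p'

/-- Constructible subsets of a topological space: finite unions of sets of the form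
(open ∩ closed). -/
def IsConstructibleSet {X : Type*} [TopologicalSpace X] (E : Set X) : Prop :=
  ∃ S : Finset (Set X × Set X), (∀ p ∈ S, IsOpen p.1 ∧ IsClosed p.2) ∧
    E = ⋃ p ∈ S, p.1 ∩ p.2

/-- Membership in `SMax^Δ R`: `p` is a prime differential ideal such that the
localization `(R/p)_s` is differentially simple for some `s ∉ p`.  The quotient and
localization are taken with their (unique) induced derivations, hence the universal
quantification over derivation families commuting with the canonical maps. -/
def InSMax {R : Type u} [CommRing R] (δ : ι → Derivation ℤ R R) (p : Ideal R) : Prop :=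
  p.IsPrime ∧ IsDiffIdeal δ p ∧
  ∃ s : R, s ∉ p ∧
    ∀ δq : ι → Derivation ℤ (R ⧸ p) (R ⧸ p),
      IsDiffHom δ δq (Ideal.Quotient.mk p) →
      ∀ (L : Type u) [CommRing L] [Algebra (R ⧸ p) L],
        IsLocalization.Away (Ideal.Quotient.mk p s) L →
        ∀ δl : ι → Derivation ℤ L L,
          IsDiffHom δq δl (algebraMap (R ⧸ p) L) → IsDiffSimple δl

end Preamble

section Aux2
variable {ι : Type*}

variable {R : Type*} [CommRing R] (δ : ι → Derivation ℤ R R)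

lemma derivApply_add (l : List ι) (a b : R) :
    derivApply δ l (a + b) = derivApply δ l a + derivApply δ l b := by
  induction l with
  | nil => rfl
  | cons i l ih => simp [derivApply, ih]

lemma derivApply_zero (l : List ι) : derivApply δ l (0 : R) = 0 := by
  induction l with
  | nil => rfl
  | cons i l ih => simp [derivApply, ih]

lemma derivApply_append (l m : List ι) (b : R) :
    derivApply δ (l ++ m) b = derivApply δ l (derivApply δ m b) := by
  induction l with
  | nil => rfl
  | cons i l ih => simp [derivApply, ih]

lemma derivApply_mem {I : Ideal R} (hI : IsDiffIdeal δ I) (l : List ι) {b : R} (hb : b ∈ I) :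
    derivApply δ l b ∈ I := by
  induction l with
  | nil => exact hb
  | cons i l ih => exact hI i _ ih

lemma span_isDiffIdeal {T : Set R} (h : ∀ i, ∀ t ∈ T, δ i t ∈ Ideal.span T) :
    IsDiffIdeal δ (Ideal.span T) := by
  intro i x hx
  induction hx using Submodule.span_induction with
  | mem t ht => exact h i t ht
  | zero => simp
  | add a b _ _ ha hb => rw [map_add]; exact Ideal.add_mem _ ha hb
  | smul r a haT ha =>
      have : δ i (r • a) = r * δ i a + a * δ i r := by
        simp [smul_eq_mul, Derivation.leibniz, mul_comm]
      rw [this]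
      exact Ideal.add_mem _ (Ideal.mul_mem_left _ _ ha)
        (Ideal.mul_mem_right _ _ haT)

/-- The differential ideal generated by all iterated derivatives of an element. -/
def derivSpan (b : R) : Ideal R := Ideal.span {x | ∃ l : List ι, derivApply δ l b = x}

lemma derivSpan_isDiffIdeal (b : R) : IsDiffIdeal δ (derivSpan δ b) := by
  apply span_isDiffIdeal
  rintro i t ⟨l, rfl⟩
  exact Ideal.subset_span ⟨i :: l, rfl⟩

lemma self_mem_derivSpan (b : R) : b ∈ derivSpan δ b :=
  Ideal.subset_span ⟨[], rfl⟩

lemma derivSpan_le {b : R} {q : Ideal R} (h : ∀ l : List ι, derivApply δ l b ∈ q) :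
    derivSpan δ b ≤ q := by
  rw [derivSpan, Ideal.span_le]; rintro x ⟨l, rfl⟩; exact h l

/-- In a radical differential ideal, `a*b ∈ I` implies `a * δ b ∈ I`. -/
lemma mul_deriv_mem {I : Ideal R} (hrad : I.radical = I) (hI : IsDiffIdeal δ I)
    {a b : R} (hab : a * b ∈ I) (i : ι) : a * δ i b ∈ I := by
  have h1 : a * δ i b + b * δ i a ∈ I := by
    have := hI i _ hab
    rwa [Derivation.leibniz, smul_eq_mul, smul_eq_mul] at this
  have h2 : (a * δ i b) * (a * δ i b) ∈ I := by
    have : (a * δ i b) * (a * δ i b) =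
        (a * δ i b) * (a * δ i b + b * δ i a) - (a * b) * (δ i a * δ i b) := by ring
    rw [this]
    exact Ideal.sub_mem _ (Ideal.mul_mem_left _ _ h1) (Ideal.mul_mem_right _ _ hab)
  rw [← hrad]
  exact ⟨2, by rwa [pow_two]⟩

lemma deriv_mul_mem {I : Ideal R} (hrad : I.radical = I) (hI : IsDiffIdeal δ I)
    {a b : R} (hab : a * b ∈ I) (i : ι) : δ i a * b ∈ I := by
  rw [mul_comm]
  exact mul_deriv_mem δ hrad hI (mul_comm a b ▸ hab) i

/-- The largest differential ideal contained in a prime `q` is prime. -/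
def diffCore (q : Ideal R) : Ideal R where
  carrier := {b | ∀ l : List ι, derivApply δ l b ∈ q}
  add_mem' := fun {a b} ha hb l => by
    rw [derivApply_add]; exact Ideal.add_mem _ (ha l) (hb l)
  zero_mem' := fun l => by rw [derivApply_zero]; exact Ideal.zero_mem q
  smul_mem' := fun r b hb l => by
    have hD : IsDiffIdeal δ (derivSpan δ b) := derivSpan_isDiffIdeal δ b
    have h1 : r • b ∈ derivSpan δ b := Ideal.mul_mem_left _ r (self_mem_derivSpan δ b)
    exact derivSpan_le δ hb (derivApply_mem δ hD l h1)

lemma diffCore_le (q : Ideal R) : diffCore δ q ≤ q := fun b hb => hb []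

lemma diffCore_isDiffIdeal (q : Ideal R) : IsDiffIdeal δ (diffCore δ q) := by
  intro i b hb l
  have : derivApply δ l (δ i b) = derivApply δ (l ++ [i]) b := by
    rw [derivApply_append]; rfl
  rw [this]; exact hb _

lemma diffCore_isPrime (hK : IsKeigher δ) {q : Ideal R} (hq : q.IsPrime) :
    (diffCore δ q).IsPrime := by
  constructor
  · intro h
    have : (1 : R) ∈ diffCore δ q := h ▸ Submodule.mem_top
    exact hq.ne_top (Ideal.eq_top_iff_one q |>.2 (this []))
  · intro x y hxy
    by_cases hx : x ∈ diffCore δ q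
    · exact Or.inl hx
    right
    obtain ⟨l0, hl0⟩ : ∃ l : List ι, derivApply δ l x ∉ q := by
      by_contra h; push_neg at h; exact hx h
    -- J : radical differential ideal containing x*y, contained in q
    set J := (derivSpan δ (x * y)).radical with hJ
    have hJd : IsDiffIdeal δ J := hK _ (derivSpan_isDiffIdeal δ (x * y))
    have hJrad : J.radical = J := Ideal.radical_idem _
    have hJq : J ≤ q := by
      rw [hJ, ← hq.radical]
      exact Ideal.radical_mono (derivSpan_le δ hxy)
    have base : ∀ m : List ι, x * derivApply δ m y ∈ J := by
      intro m
      induction m with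
      | nil => exact Ideal.le_radical (self_mem_derivSpan δ (x * y))
      | cons i m ih => exact mul_deriv_mem δ hJrad hJd ih i
    have main : ∀ l m : List ι, derivApply δ l x * derivApply δ m y ∈ J := by
      intro l
      induction l with
      | nil => exact base
      | cons i l ih => exact fun m => deriv_mul_mem δ hJrad hJd (ih m) i
    intro m
    exact (hq.mem_or_mem (hJq (main l0 m))).resolve_left hl0

end Aux2

lemma derivApply_hom' {A B : Type*} [CommRing A] [CommRing B]
    {δA : ι → Derivation ℤ A A} {δB : ι → Derivation ℤ B B} {f : A →+* B}
    (hf : IsDiffHom δA δB f) (l : List ι) (a : A) :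
    f (derivApply δA l a) = derivApply δB l (f a) := by
  induction l with
  | nil => rfl
  | cons i l ih => show f (δA i _) = δB i _ ; rw [hf i _, ih]



/-- For a differential homomorphism `f : A → B` of Keigher rings and a
prime differential ideal `p` of `A`, the following are equivalent: `p^{ec} = p`; `p` is
the contraction of a prime ideal of `B`; `p` is the contraction of a prime *differential*
ideal of `B`. -/
theorem stmt0 {ι A B : Type*} [CommRing A] [CommRing B]
    (δA : ι → Derivation ℤ A A) (δB : ι → Derivation ℤ B B)
    (hKA : IsKeigher δA) (hKB : IsKeigher δB)
    (f : A →+* B) (hf : IsDiffHom δA δB f)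
    (p : Ideal A) (hp : p.IsPrime) (hpd : IsDiffIdeal δA p) :
    List.TFAE [
      (p.map f).comap f = p,
      ∃ q : Ideal B, q.IsPrime ∧ q.comap f = p,
      ∃ q : Ideal B, q.IsPrime ∧ IsDiffIdeal δB q ∧ q.comap f = p] := by
  tfae_have 1 → 2 := by
    intro h
    set S : Submonoid B := p.primeCompl.map f with hS
    have hdisj : Disjoint (↑(p.map f) : Set B) (S : Set B) := by
      rw [Set.disjoint_left]
      rintro b hb ⟨a, ha, rfl⟩
      have h2 : a ∈ (p.map f).comap f := hb
      rw [h] at h2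
      exact ha h2
    obtain ⟨q, hq, hle, hd⟩ := Ideal.exists_le_prime_disjoint (p.map f) S hdisj
    refine ⟨q, hq, le_antisymm ?_ ?_⟩
    · intro a ha
      by_contra hap
      exact Set.disjoint_left.1 hd ha ⟨a, hap, rfl⟩
    · intro a ha
      exact hle (Ideal.mem_map_of_mem f ha)
  tfae_have 2 → 3 := by
    rintro ⟨q, hq, hqc⟩
    refine ⟨diffCore δB q, diffCore_isPrime δB hKB hq, diffCore_isDiffIdeal δB q,
      le_antisymm ?_ ?_⟩
    · exact le_trans (Ideal.comap_mono (diffCore_le δB q)) (le_of_eq hqc)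
    · intro a ha
      intro l
      rw [← derivApply_hom' hf l a]
      have : derivApply δA l a ∈ p := derivApply_mem δA hpd l ha
      have h2 : derivApply δA l a ∈ q.comap f := hqc.symm ▸ this
      exact h2
  tfae_have 3 → 1 := by
    rintro ⟨q, hq, _, hqc⟩
    refine le_antisymm ?_ Ideal.le_comap_map
    have hmap : p.map f ≤ q := Ideal.map_le_iff_le_comap.2 (le_of_eq hqc.symm)
    exact le_trans (Ideal.comap_mono hmap) (le_of_eq hqc)
  tfae_finish
end

section
/- Let f : A → B be a differential homomorphism of Keigher rings. If the map f* : Spec B → Spec A, 𝔮 ↦ f⁻¹(𝔮), is surjective, then the map f*_Δ : Spec^Δ B → Spec^Δ A, 𝔮 ↦ f⁻¹(𝔮), is surjective; that is, every prime differential ideal of A is the contraction of a prime differential ideal of B. -/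
/-!
Common differential-algebra preamble.

A differential ring is a commutative ring `R` equipped with a family of derivations
`δ : ι → Derivation ℤ R R`.  Induced derivations on quotients by differential ideals
and on localizations are unique (the canonical map is an epimorphism), which justifies
quantifying universally over derivation families commuting with the canonical map.
-/

universe u v

/-!
Let `𝔭` be a prime differential ideal of `A`. Since `𝔭` is a contraction, the extended ideal
`𝔭B` is a differential ideal missing the multiplicative set `f(A ∖ 𝔭)`, and it suffices to
enlarge it to a prime differential ideal still missing `f(A ∖ 𝔭)`. By Zorn there is a
differential ideal `𝔮 ⊇ 𝔭B` maximal with this property; as in the classical case it is prime.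
The Keigher property makes `𝔮` radical, and for a radical differential ideal every colon ideal
`𝔮 : x` is again differential (from `xy ∈ 𝔮` one gets `(x δy)² ∈ 𝔮`), which replaces the ideals
`𝔮 + (x)` of the classical argument.
-/

section DiffIdeal

variable {ι R : Type*} [CommRing R] {δ : ι → Derivation ℤ R R}

namespace IsDiffIdeal

theorem span {s : Set R} (h : ∀ i, ∀ x ∈ s, δ i x ∈ Ideal.span s) :
    IsDiffIdeal δ (Ideal.span s) := by
  intro i x hx
  induction hx using Submodule.span_induction with
  | mem x hxs => exact h i x hxs
  | zero => simp
  | add x y _ _ ihx ihy => simpa using Ideal.add_mem _ ihx ihy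
  | smul b x hx ihx =>
    rw [smul_eq_mul, Derivation.leibniz, smul_eq_mul, smul_eq_mul]
    exact Ideal.add_mem _ (Ideal.mul_mem_left _ b ihx) (Ideal.mul_mem_right _ _ hx)

theorem map {A : Type*} [CommRing A] {δA : ι → Derivation ℤ A A} {f : A →+* R}
    (hf : IsDiffHom δA δ f) {p : Ideal A} (hp : IsDiffIdeal δA p) :
    IsDiffIdeal δ (p.map f) := by
  refine span fun i x ⟨a, ha, hax⟩ => ?_
  rw [← hax, ← hf i a]
  exact Ideal.subset_span ⟨δA i a, hp i a ha, rfl⟩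

theorem sSup_of_directedOn {c : Set (Ideal R)} (hne : c.Nonempty)
    (hdir : DirectedOn (· ≤ ·) c) (hc : ∀ I ∈ c, IsDiffIdeal δ I) :
    IsDiffIdeal δ (sSup c) := by
  intro i x hx
  obtain ⟨I, hIc, hxI⟩ := (Submodule.mem_sSup_of_directed hne hdir).1 hx
  exact le_sSup hIc (hc I hIc i x hxI)

theorem mul_deriv_mem {q : Ideal R} (hq : IsDiffIdeal δ q) (hrad : q.IsRadical)
    {x y : R} (hxy : x * y ∈ q) (i : ι) : x * δ i y ∈ q := by
  have hleib : x * δ i y + y * δ i x ∈ q := by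
    simpa only [Derivation.leibniz, smul_eq_mul, add_comm] using hq i _ hxy
  refine hrad ⟨2, ?_⟩
  have hsq : (x * δ i y) ^ 2 = x * δ i y * (x * δ i y + y * δ i x) - x * y * (δ i y * δ i x) := by
    ring
  rw [hsq]
  exact q.sub_mem (q.mul_mem_left _ hleib) (q.mul_mem_right _ hxy)

theorem colon_singleton {q : Ideal R} (hq : IsDiffIdeal δ q) (hrad : q.IsRadical) (x : R) :
    IsDiffIdeal δ (q.colon {x}) := by
  intro i y hy
  rw [Submodule.mem_colon_singleton, smul_eq_mul] at hy ⊢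
  rw [mul_comm] at hy ⊢
  exact hq.mul_deriv_mem hrad hy i

end IsDiffIdeal

namespace IsKeigher

theorem isPrime_of_maximally_disjoint (hK : IsKeigher δ) (S : Submonoid R) {q : Ideal R}
    (hq : IsDiffIdeal δ q) (hdisj : Disjoint (q : Set R) S)
    (hmax : ∀ J : Ideal R, IsDiffIdeal δ J → q < J → ¬Disjoint (J : Set R) S) :
    q.IsPrime := by
  have hrad : q.IsRadical := by
    refine Ideal.radical_eq_iff.mp (q.le_radical.lt_or_eq.resolve_left fun hlt => ?_).symm
    refine hmax _ (hK q hq) hlt (Set.disjoint_left.mpr fun x ⟨n, hxn⟩ hxS => ?_)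
    exact Set.disjoint_left.mp hdisj hxn (S.pow_mem hxS n)
  have hcolon : ∀ {x y : R}, y ∉ q → y * x ∈ q → ∃ s ∈ S, s * x ∈ q := by
    intro x y hy hyx
    have hlt : q < q.colon {x} :=
      SetLike.lt_iff_le_and_exists.mpr ⟨fun z hz => by simpa using q.mul_mem_right x hz,
        y, by simpa using hyx, hy⟩
    obtain ⟨s, hs, hsS⟩ := Set.not_disjoint_iff.mp (hmax _ (hq.colon_singleton hrad x) hlt)
    exact ⟨s, hsS, by simpa using hs⟩
  refine ⟨fun htop => Set.disjoint_left.mp hdisj (htop ▸ Submodule.mem_top) S.one_mem,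
    fun {x y} hxy => or_iff_not_imp_left.mpr fun hx => by_contra fun hy => ?_⟩
  -- two colon steps: `x * y ∈ q` gives `s * y ∈ q`, and then `t * s ∈ q`, with `s, t ∈ S`
  obtain ⟨s, hsS, hsy⟩ := hcolon hx hxy
  obtain ⟨t, htS, hts⟩ := hcolon hy (mul_comm s y ▸ hsy)
  exact Set.disjoint_left.mp hdisj hts (S.mul_mem htS hsS)

theorem exists_le_isPrime_disjoint (hK : IsKeigher δ) (S : Submonoid R) {I : Ideal R}
    (hI : IsDiffIdeal δ I) (hdisj : Disjoint (I : Set R) S) :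
    ∃ q : Ideal R, q.IsPrime ∧ IsDiffIdeal δ q ∧ I ≤ q ∧ Disjoint (q : Set R) S := by
  obtain ⟨q, hIq, hq⟩ := zorn_le_nonempty₀ {J : Ideal R | IsDiffIdeal δ J ∧ Disjoint (J : Set R) S}
    (by
      intro c hc hchain J hJ
      have hdir := hchain.directedOn
      refine ⟨sSup c, ⟨IsDiffIdeal.sSup_of_directedOn ⟨J, hJ⟩ hdir fun K hK => (hc hK).1,
        Set.disjoint_left.mpr fun x hx => ?_⟩, fun K hK => le_sSup hK⟩
      obtain ⟨K, hKc, hxK⟩ := (Submodule.mem_sSup_of_directed ⟨J, hJ⟩ hdir).1 hx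
      exact Set.disjoint_left.mp (hc hKc).2 hxK)
    I ⟨hI, hdisj⟩
  obtain ⟨hqd, hqS⟩ := hq.prop
  exact ⟨q, hK.isPrime_of_maximally_disjoint S hqd hqS
    (fun J hJ hlt hJS => hq.not_prop_of_gt hlt ⟨hJ, hJS⟩), hqd, hIq, hqS⟩

theorem exists_isPrime_isDiffIdeal_comap_eq {A : Type*} [CommRing A]
    {δA : ι → Derivation ℤ A A} (hK : IsKeigher δ) {f : A →+* R} (hf : IsDiffHom δA δ f)
    {p : Ideal A} [p.IsPrime] (hpd : IsDiffIdeal δA p) (hp : (p.map f).comap f = p) :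
    ∃ q : Ideal R, q.IsPrime ∧ IsDiffIdeal δ q ∧ q.comap f = p := by
  obtain ⟨q, hq, hqd, hpq, hqS⟩ := hK.exists_le_isPrime_disjoint _ (hpd.map hf)
    (Ideal.disjoint_map_primeCompl_iff_comap_le.mpr hp.le)
  exact ⟨q, hq, hqd, le_antisymm (Ideal.disjoint_map_primeCompl_iff_comap_le.mp hqS)
    (Ideal.map_le_iff_le_comap.mp hpq)⟩

end IsKeigher

end DiffIdeal

theorem stmt1_general {ι A B : Type*} [CommRing A] [CommRing B]
    (δA : ι → Derivation ℤ A A) (δB : ι → Derivation ℤ B B)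
    (hKB : IsKeigher δB)
    (f : A →+* B) (hf : IsDiffHom δA δB f)
    (hsurj : Function.Surjective (PrimeSpectrum.comap f)) :
    Function.Surjective (diffComap hf) := by
  rintro ⟨p, hpd⟩
  obtain ⟨q₀, hq₀⟩ := hsurj p
  have hp : (p.asIdeal.map f).comap f = p.asIdeal :=
    (Ideal.comap_map_eq_self_iff_of_isPrime _).mpr
      ⟨q₀.asIdeal, q₀.isPrime, congrArg PrimeSpectrum.asIdeal hq₀⟩
  obtain ⟨q, hq, hqd, hqp⟩ := hKB.exists_isPrime_isDiffIdeal_comap_eq hf hpd hp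
  exact ⟨⟨⟨q, hq⟩, hqd⟩, Subtype.ext (PrimeSpectrum.ext hqp)⟩

/-- If the map `f* : Spec B → Spec A` induced by a differential
homomorphism of Keigher rings is surjective, then so is the map
`f*_Δ : Spec^Δ B → Spec^Δ A`. -/
theorem stmt1 {ι A B : Type*} [CommRing A] [CommRing B]
    (δA : ι → Derivation ℤ A A) (δB : ι → Derivation ℤ B B)
    (hKA : IsKeigher δA) (hKB : IsKeigher δB)
    (f : A →+* B) (hf : IsDiffHom δA δB f)
    (hsurj : Function.Surjective (PrimeSpectrum.comap f)) :
    Function.Surjective (diffComap hf) :=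
  stmt1_general δA δB hKB f hf hsurj
end

section
/- Let f : A → B be a differential homomorphism of Keigher rings. If f has the going-up property for prime ideals, then f has the going-up property for prime differential ideals: whenever 𝔭 ⊆ 𝔭' are prime differential ideals of A and 𝔮 is a prime differential ideal of B with f⁻¹(𝔮) = 𝔭, there exists a prime differential ideal 𝔮' of B with 𝔮 ⊆ 𝔮' and f⁻¹(𝔮') = 𝔭'. -/
/-!
Common differential-algebra preamble.

A differential ring is a commutative ring `R` equipped with a family of derivations
`δ : ι → Derivation ℤ R R`.  Induced derivations on quotients by differential ideals
and on localizations are unique (the canonical map is an epimorphism), which justifies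
quantifying universally over derivation families commuting with the canonical map.
-/

universe u v

section Aux

variable {ι R : Type*} [CommRing R]

/-- For a minimal prime `P` over `I` and `a ∈ P`, some `s ∉ P` satisfies `s * a ^ n ∈ I`. -/
theorem aux_exists_mul_pow_mem {I P : Ideal R} (hP : P ∈ I.minimalPrimes) {a : R}
    (ha : a ∈ P) : ∃ s ∉ P, ∃ n : ℕ, s * a ^ n ∈ I := by
  by_contra h
  push_neg at h
  have hPp : P.IsPrime := hP.1.1
  have hdisj : Disjoint (I : Set R) ↑(P.primeCompl ⊔ Submonoid.powers a) := by
    rw [Set.disjoint_left]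
    rintro x hxI hxS
    obtain ⟨s, hs, t, ht, rfl⟩ := Submonoid.mem_sup.mp hxS
    obtain ⟨n, rfl⟩ := ht
    exact h s hs n hxI
  obtain ⟨Q, hQp, hIQ, hQdisj⟩ := Ideal.exists_le_prime_disjoint I _ hdisj
  have hQP : Q ≤ P := fun x hxQ => by
    by_contra hxP
    exact Set.disjoint_left.mp hQdisj hxQ (Submonoid.mem_sup_left hxP)
  have hPQ : P ≤ Q := hP.2 ⟨hQp, hIQ⟩ hQP
  exact Set.disjoint_left.mp hQdisj (hPQ ha)
    (Submonoid.mem_sup_right (Submonoid.mem_powers a))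

/-- For a minimal prime over a radical ideal, membership is witnessed by a single
multiplier. -/
theorem aux_exists_mul_mem {I P : Ideal R} (hrad : I.radical = I)
    (hP : P ∈ I.minimalPrimes) {a : R} (ha : a ∈ P) : ∃ s ∉ P, s * a ∈ I := by
  obtain ⟨s, hs, n, hsn⟩ := aux_exists_mul_pow_mem hP ha
  refine ⟨s, hs, ?_⟩
  rcases Nat.eq_zero_or_pos n with rfl | hn
  · simp only [pow_zero, mul_one] at hsn
    exact absurd (hP.1.2 hsn) hs
  · rw [← hrad]
    refine ⟨n, ?_⟩
    have : (s * a) ^ n = s ^ (n - 1) * (s * a ^ n) := by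
      rw [mul_pow]
      rw [show s ^ n = s ^ (n - 1) * s by rw [← pow_succ, Nat.sub_add_cancel hn]]
      ring
    rw [this]
    exact Ideal.mul_mem_left _ _ hsn

/-- A minimal prime over a radical differential ideal is differential. -/
theorem aux_minimalPrime_isDiff {δ : ι → Derivation ℤ R R} {I P : Ideal R}
    (hI : IsDiffIdeal δ I) (hrad : I.radical = I) (hP : P ∈ I.minimalPrimes) :
    IsDiffIdeal δ P := by
  intro i a ha
  have hPp : P.IsPrime := hP.1.1
  obtain ⟨s, hs, hsa⟩ := aux_exists_mul_mem hrad hP ha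
  have h1 : δ i (s * a) ∈ I := hI i _ hsa
  have h2 : s * δ i (s * a) - (s * a) * δ i s ∈ I :=
    I.sub_mem (I.mul_mem_left _ h1) (I.mul_mem_right _ hsa)
  have h3 : s * δ i (s * a) - (s * a) * δ i s = s * s * δ i a := by
    rw [Derivation.leibniz]
    simp only [smul_eq_mul]
    ring
  rw [h3] at h2
  have h4 : s * s * δ i a ∈ P := hP.1.2 h2
  rcases hPp.mem_or_mem h4 with h | h
  · exact absurd ((hPp.mem_or_mem h).elim id id) hs
  · exact h

/-- The image ideal of a differential ideal under a differential homomorphism is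
differential. -/
theorem aux_map_isDiff {S : Type*} [CommRing S] {δ : ι → Derivation ℤ R R}
    {δS : ι → Derivation ℤ S S} {f : R →+* S} (hf : IsDiffHom δ δS f) {I : Ideal R}
    (hI : IsDiffIdeal δ I) : IsDiffIdeal δS (I.map f) := by
  intro i x hx
  refine Submodule.span_induction ?_ ?_ ?_ ?_ hx
  · rintro y ⟨a, ha, rfl⟩
    rw [← hf i a]
    exact Ideal.mem_map_of_mem f (hI i a ha)
  · simp only [map_zero]
    exact (I.map f).zero_mem
  · intro y z _ _ hy hz
    rw [map_add]
    exact (I.map f).add_mem hy hz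
  · intro r y hy' hy
    rw [smul_eq_mul, Derivation.leibniz]
    refine (I.map f).add_mem ?_ ?_
    · simpa [smul_eq_mul] using (I.map f).mul_mem_left r hy
    · simpa [smul_eq_mul] using (I.map f).mul_mem_right (δS i r) hy'

/-- The sup of two differential ideals is differential. -/
theorem aux_sup_isDiff {δ : ι → Derivation ℤ R R} {I J : Ideal R}
    (hI : IsDiffIdeal δ I) (hJ : IsDiffIdeal δ J) : IsDiffIdeal δ (I ⊔ J) := by
  intro i x hx
  obtain ⟨y, hy, z, hz, rfl⟩ := Submodule.mem_sup.mp hx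
  rw [map_add]
  exact Submodule.add_mem _ (Ideal.mem_sup_left (hI i y hy)) (Ideal.mem_sup_right (hJ i z hz))

end Aux

/-- A differential homomorphism of Keigher rings with the going-up
property for prime ideals has the going-up property for prime differential ideals. -/
theorem stmt2 {ι A B : Type*} [CommRing A] [CommRing B]
    (δA : ι → Derivation ℤ A A) (δB : ι → Derivation ℤ B B)
    (hKA : IsKeigher δA) (hKB : IsKeigher δB)
    (f : A →+* B) (hf : IsDiffHom δA δB f)
    (hgu : HasGoingUp f) :
    HasGoingUpDiff δA δB f := by
  intro p p' hp hpd hp' hp'd hpp' q hq hqd hqc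
  obtain ⟨q₀, hq₀p, hqq₀, hq₀c⟩ := hgu p p' hp hp' hpp' q hq hqc
  -- the differential ideal q ⊔ map f p'
  set J0 : Ideal B := q ⊔ Ideal.map f p' with hJ0
  have hJ0d : IsDiffIdeal δB J0 := aux_sup_isDiff hqd (aux_map_isDiff hf hp'd)
  set J : Ideal B := J0.radical with hJdef
  have hJd : IsDiffIdeal δB J := hKB J0 hJ0d
  have hJrad : J.radical = J := Ideal.radical_idem J0
  have hJ0q₀ : J0 ≤ q₀ := by
    refine sup_le hqq₀ ?_
    rw [Ideal.map_le_iff_le_comap, hq₀c]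
  have hJq₀ : J ≤ q₀ := hq₀p.radical_le_iff.mpr hJ0q₀
  obtain ⟨P, hPmin, hPq₀⟩ := Ideal.exists_minimalPrimes_le (I := J) (J := q₀) hJq₀
  have hPd : IsDiffIdeal δB P := aux_minimalPrime_isDiff hJd hJrad hPmin
  refine ⟨P, hPmin.1.1, hPd, ?_, ?_⟩
  · exact le_trans (le_trans le_sup_left (Ideal.le_radical (I := J0))) hPmin.1.2
  · refine le_antisymm ?_ ?_
    · rw [← hq₀c]
      exact Ideal.comap_mono hPq₀
    · intro a ha
      have : f a ∈ J0 := le_sup_right (α := Ideal B) (Ideal.mem_map_of_mem f ha)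
      exact hPmin.1.2 (Ideal.le_radical this)
end

section
/- Let A be a Keigher ring. Then every prime differential ideal 𝔭 of A is the intersection of all ideals in SMax^Δ A containing 𝔭; consequently SMax^Δ A is very dense in Spec^Δ A, i.e. the map U ↦ U ∩ SMax^Δ A is a bijection from the open subsets of Spec^Δ A onto the open subsets of SMax^Δ A (equivalently, every nonempty locally closed subset of Spec^Δ A meets SMax^Δ A). -/
/-!
Common differential-algebra preamble.

A differential ring is a commutative ring `R` equipped with a family of derivations
`δ : ι → Derivation ℤ R R`.  Induced derivations on quotients by differential ideals
and on localizations are unique (the canonical map is an epimorphism), which justifies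
quantifying universally over derivation families commuting with the canonical map.
-/

universe u v

section Aux

variable {ι : Type*} {A : Type u} [CommRing A]

/-- In a Keigher ring, a minimal prime over a differential (radical) ideal is
differential, via the saturation argument. -/
theorem minimalPrime_isDiff (δ : ι → Derivation ℤ A A) (hK : IsKeigher δ)
    {K p' : Ideal A} (hKd : IsDiffIdeal δ K) (hp' : p' ∈ K.minimalPrimes) :
    IsDiffIdeal δ p' := by
  obtain ⟨⟨hp'prime, hKp'⟩, hp'min⟩ := hp'
  have hone : (1 : A) ∉ p' := (Ideal.ne_top_iff_one _).mp hp'prime.ne_top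
  -- saturation claim
  have hsat : ∀ x ∈ p', ∃ s ∉ p', ∃ n : ℕ, s * x ^ n ∈ K := by
    intro x hx
    by_contra h
    push_neg at h
    set M : Submonoid A :=
      { carrier := {y | ∃ s ∉ p', ∃ n : ℕ, s * x ^ n = y}
        one_mem' := ⟨1, hone, 0, by simp⟩
        mul_mem' := by
          rintro a b ⟨s, hs, n, rfl⟩ ⟨t, ht, m, rfl⟩
          exact ⟨s * t, fun hst => ((hp'prime.mem_or_mem hst).elim hs ht), n + m, by ring⟩ }
      with hM
    have hdisj : Disjoint (K : Set A) (M : Set A) := by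
      rw [Set.disjoint_left]
      rintro y hyK ⟨s, hs, n, rfl⟩
      exact h s hs n hyK
    obtain ⟨P0, hP0prime, hKP0, hP0disj⟩ := Ideal.exists_le_prime_disjoint K M hdisj
    have hP0p' : P0 ≤ p' := by
      intro y hy
      by_contra hyp'
      exact Set.disjoint_left.mp hP0disj hy ⟨y, hyp', 0, by simp⟩
    have : p' ≤ P0 := hp'min ⟨hP0prime, hKP0⟩ hP0p'
    have hxP0 : x ∈ P0 := this hx
    exact Set.disjoint_left.mp hP0disj hxP0 ⟨1, hone, 1, by simp⟩
  -- the saturation ideal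
  let J0 : Ideal A :=
  { carrier := {y | ∃ s ∉ p', s * y ∈ K}
    add_mem' := by
      rintro a b ⟨s, hs, hsa⟩ ⟨t, ht, htb⟩
      refine ⟨s * t, fun hst => ((hp'prime.mem_or_mem hst).elim hs ht), ?_⟩
      have : s * t * (a + b) = t * (s * a) + s * (t * b) := by ring
      rw [this]
      exact K.add_mem (K.mul_mem_left _ hsa) (K.mul_mem_left _ htb)
    zero_mem' := ⟨1, hone, by simp⟩
    smul_mem' := by
      rintro c y ⟨s, hs, hsy⟩
      refine ⟨s, hs, ?_⟩
      have : s * (c • y) = c * (s * y) := by rw [smul_eq_mul]; ring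
      rw [this]
      exact K.mul_mem_left _ hsy }
  have hJ0d : IsDiffIdeal δ J0 := by
    rintro i y ⟨s, hs, hsy⟩
    refine ⟨s * s, fun hss => ((hp'prime.mem_or_mem hss).elim hs hs), ?_⟩
    have hder : δ i (s * y) = s * δ i y + y * δ i s := by
      rw [Derivation.leibniz]; simp [smul_eq_mul]
    have : s * s * δ i y = s * δ i (s * y) - (s * y) * δ i s := by rw [hder]; ring
    rw [this]
    exact K.sub_mem (K.mul_mem_left _ (hKd i _ hsy)) (K.mul_mem_right _ hsy)
  have hrad : J0.radical = p' := by
    apply le_antisymm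
    · rw [hp'prime.radical_le_iff]
      rintro y ⟨s, hs, hsy⟩
      exact ((hp'prime.mem_or_mem (hKp' hsy)).resolve_left hs)
    · intro y hy
      obtain ⟨s, hs, n, hsn⟩ := hsat y hy
      exact ⟨n, s, hs, hsn⟩
  have := hK J0 hJ0d
  rwa [hrad] at this

/-- The key lemma: in a Keigher ring, above every prime differential ideal avoiding `f`
there is a member of `SMax^Δ` avoiding `f`. -/
theorem exists_inSMax (δ : ι → Derivation ℤ A A) (hK : IsKeigher δ)
    {p : Ideal A} (hp : p.IsPrime) (hpd : IsDiffIdeal δ p) {f : A} (hf : f ∉ p) :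
    ∃ q : Ideal A, InSMax δ q ∧ p ≤ q ∧ f ∉ q := by
  -- Zorn's lemma
  have hchain : ∀ c ⊆ {q : Ideal A | q.IsPrime ∧ IsDiffIdeal δ q ∧ f ∉ q},
      IsChain (· ≤ ·) c → ∀ y ∈ c,
      ∃ ub ∈ {q : Ideal A | q.IsPrime ∧ IsDiffIdeal δ q ∧ f ∉ q}, ∀ z ∈ c, z ≤ ub := by
    rintro c hcs hc y hy
    haveI : Nonempty c := ⟨⟨y, hy⟩⟩
    have hmem : ∀ x : A, x ∈ sSup c ↔ ∃ r ∈ c, x ∈ r := by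
      intro x
      rw [sSup_eq_iSup']
      rw [Submodule.mem_iSup_of_directed _ hc.directedOn.directed_val]
      constructor
      · rintro ⟨⟨r, hr⟩, hxr⟩; exact ⟨r, hr, hxr⟩
      · rintro ⟨r, hr, hxr⟩; exact ⟨⟨r, hr⟩, hxr⟩
    refine ⟨sSup c, ⟨⟨?_, ?_⟩, ?_, ?_⟩, fun z hz => le_sSup hz⟩
    · intro h
      rw [Ideal.eq_top_iff_one, hmem] at h
      obtain ⟨r, hr, h1⟩ := h
      exact (hcs hr).1.ne_top ((Ideal.eq_top_iff_one r).mpr h1)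
    · intro a b hab
      rw [hmem] at hab
      obtain ⟨r, hr, hab⟩ := hab
      rcases (hcs hr).1.mem_or_mem hab with h | h
      · exact Or.inl ((le_sSup hr) h)
      · exact Or.inr ((le_sSup hr) h)
    · intro i x hx
      rw [hmem] at hx ⊢
      obtain ⟨r, hr, hxr⟩ := hx
      exact ⟨r, hr, (hcs hr).2.1 i x hxr⟩
    · intro hfc
      rw [hmem] at hfc
      obtain ⟨r, hr, hfr⟩ := hfc
      exact (hcs hr).2.2 hfr
  obtain ⟨q, hpq, hqmax⟩ := zorn_le_nonempty₀
    {q : Ideal A | q.IsPrime ∧ IsDiffIdeal δ q ∧ f ∉ q} hchain p ⟨hp, hpd, hf⟩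
  obtain ⟨hqprime, hqd, hqf⟩ := hqmax.prop
  haveI := hqprime
  refine ⟨q, ⟨hqprime, hqd, f, hqf, ?_⟩, hpq, hqf⟩
  intro δq hδq L _ _ hloc δl hδl
  haveI := hloc
  have hmkf : ∀ n : ℕ, (Ideal.Quotient.mk q f) ^ n ≠ 0 := by
    intro n hn
    rw [← map_pow, Ideal.Quotient.eq_zero_iff_mem] at hn
    exact hqf (hqprime.mem_of_pow_mem n hn)
  have hnt : Nontrivial L := by
    by_contra h
    rw [not_nontrivial_iff_subsingleton] at h
    have h0 : algebraMap (A ⧸ q) L 1 = 0 := Subsingleton.elim _ _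
    obtain ⟨m, hm⟩ := (IsLocalization.map_eq_zero_iff
      (Submonoid.powers (Ideal.Quotient.mk q f)) L 1).mp h0
    obtain ⟨n, hn⟩ := m.2
    rw [mul_one] at hm
    exact hmkf n (hn.trans hm)
  refine ⟨hnt, ?_⟩
  intro J hJ
  by_cases hJT : J = ⊤
  · exact Or.inr hJT
  left
  set g : A →+* L := (algebraMap (A ⧸ q) L).comp (Ideal.Quotient.mk q) with hg
  have hgd : IsDiffHom δ δl g := hδq.comp hδl
  set I : Ideal A := J.comap g with hI
  have hId : IsDiffIdeal δ I := by
    intro i x hx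
    show g (δ i x) ∈ J
    rw [hgd i x]
    exact hJ i _ hx
  have hqI : q ≤ I := by
    intro x hx
    show g x ∈ J
    have : g x = 0 := by
      rw [hg, RingHom.comp_apply, Ideal.Quotient.eq_zero_iff_mem.mpr hx, map_zero]
    rw [this]; exact J.zero_mem
  have hgfu : IsUnit (g f) :=
    IsLocalization.map_units L (⟨Ideal.Quotient.mk q f,
      Submonoid.mem_powers _⟩ : Submonoid.powers (Ideal.Quotient.mk q f))
  have hfI : f ∉ I.radical := by
    rintro ⟨n, hn⟩
    apply hJT
    apply J.eq_top_of_isUnit_mem _ (hgfu.pow n)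
    have : g f ^ n = g (f ^ n) := (map_pow g f n).symm
    rw [this]
    exact hn
  set K : Ideal A := I.radical with hKdef
  have hKd : IsDiffIdeal δ K := hK I hId
  have hqK : q ≤ K := le_trans hqI Ideal.le_radical
  -- find a prime over K avoiding f
  have hfK : f ∉ K := hfI
  rw [hKdef, Ideal.radical_eq_sInf, Ideal.mem_sInf] at hfK
  push_neg at hfK
  obtain ⟨P, ⟨hIP, hPprime⟩, hfP⟩ := hfK
  haveI := hPprime
  obtain ⟨p', hp'min, hp'P⟩ := Ideal.exists_minimalPrimes_le
    (show K ≤ P from hPprime.radical_le_iff.mpr hIP)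
  have hp'prime : p'.IsPrime := hp'min.1.1
  have hp'd : IsDiffIdeal δ p' := minimalPrime_isDiff δ hK hKd hp'min
  have hfp' : f ∉ p' := fun h => hfP (hp'P h)
  have hqp' : q ≤ p' := le_trans hqK hp'min.1.2
  have hp'q : p' = q :=
    le_antisymm (hqmax.le_of_ge ⟨hp'prime, hp'd, hfp'⟩ hqp') hqp'
  have hIq : I ≤ q := le_trans Ideal.le_radical (le_trans hp'min.1.2 (le_of_eq hp'q))
  -- now J = ⊥
  rw [eq_bot_iff]
  intro x hx
  obtain ⟨⟨y, m⟩, hym⟩ := IsLocalization.surj (Submonoid.powers (Ideal.Quotient.mk q f)) x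
  obtain ⟨a, rfl⟩ := Ideal.Quotient.mk_surjective y
  have haI : a ∈ I := by
    show g a ∈ J
    rw [hg, RingHom.comp_apply, ← hym]
    exact J.mul_mem_right _ hx
  have ha0 : algebraMap (A ⧸ q) L (Ideal.Quotient.mk q a) = 0 := by
    rw [Ideal.Quotient.eq_zero_iff_mem.mpr (hIq haI), map_zero]
  rw [ha0] at hym
  have hmu : IsUnit (algebraMap (A ⧸ q) L (m : A ⧸ q)) := IsLocalization.map_units L m
  exact (Submodule.mem_bot L).mpr ((hmu.mul_left_eq_zero).mp hym)

end Aux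


/-- Let `A` be a Keigher ring.  Every prime differential ideal of
`A` is the intersection of the members of `SMax^Δ A` containing it; consequently
`SMax^Δ A` is very dense in `Spec^Δ A`: `U ↦ U ∩ SMax^Δ A` is a bijection from the open
subsets of `Spec^Δ A` onto the open subsets of `SMax^Δ A`. -/
theorem stmt16 {ι : Type*} {A : Type u} [CommRing A] (δ : ι → Derivation ℤ A A)
    (hK : IsKeigher δ) :
    (∀ p : Ideal A, p.IsPrime → IsDiffIdeal δ p →
      p = sInf {m : Ideal A | InSMax δ m ∧ p ≤ m}) ∧
    Function.Bijective
      (fun U : {s : Set (DiffSpec δ) // IsOpen s} =>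
        (⟨Subtype.val ⁻¹' U.1, U.2.preimage continuous_subtype_val⟩ :
          {t : Set {x : DiffSpec δ // InSMax δ x.1.asIdeal} // IsOpen t})) := by
  have key := fun {p : Ideal A} (hp : p.IsPrime) (hpd : IsDiffIdeal δ p) {f : A}
    (hf : f ∉ p) => exists_inSMax δ hK hp hpd hf
  constructor
  · intro p hp hpd
    apply le_antisymm
    · exact le_sInf fun m hm => hm.2
    · intro x hx
      by_contra hxp
      obtain ⟨q, hq, hpq, hxq⟩ := key hp hpd hxp
      exact hxq (Ideal.mem_sInf.mp hx ⟨hq, hpq⟩)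
  · -- density helper
    have dense : ∀ s t : Set (DiffSpec δ), IsOpen s → IsOpen t →
        (∀ x : DiffSpec δ, InSMax δ x.1.asIdeal → (x ∈ s ↔ x ∈ t)) → s ⊆ t := by
      intro s t hs ht hst x hxs
      obtain ⟨S, hS, rfl⟩ := isOpen_induced_iff.mp hs
      obtain ⟨T, hT, rfl⟩ := isOpen_induced_iff.mp ht
      have hxS : x.1 ∈ S := hxs
      obtain ⟨_, ⟨r, rfl⟩, hxr, hrS⟩ :=
        (PrimeSpectrum.isTopologicalBasis_basic_opens (R := A)).exists_subset_of_mem_open hxS hS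
      have hrx : r ∉ x.1.asIdeal := hxr
      obtain ⟨q, hq, hpq, hrq⟩ := key x.1.2 x.2 hrx
      set Q : DiffSpec δ := ⟨⟨q, hq.1⟩, hq.2.1⟩ with hQ
      have hQs : Q ∈ Subtype.val ⁻¹' S := hrS (show Q.1 ∈ (PrimeSpectrum.basicOpen r : Set (PrimeSpectrum A)) from hrq)
      have hQt : Q ∈ Subtype.val ⁻¹' T := (hst Q hq).mp hQs
      have hspec : x.1 ⤳ Q.1 := (PrimeSpectrum.le_iff_specializes x.1 Q.1).mp hpq
      exact hspec.mem_open hT hQt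
    constructor
    · rintro ⟨s, hs⟩ ⟨t, ht⟩ h
      have h' : Subtype.val ⁻¹' s = (Subtype.val ⁻¹' t :
          Set {x : DiffSpec δ // InSMax δ x.1.asIdeal}) := congrArg Subtype.val h
      have hiff : ∀ x : DiffSpec δ, InSMax δ x.1.asIdeal → (x ∈ s ↔ x ∈ t) := by
        intro x hx
        constructor
        · intro hxs
          exact (Set.ext_iff.mp h' ⟨x, hx⟩).mp hxs
        · intro hxt
          exact (Set.ext_iff.mp h' ⟨x, hx⟩).mpr hxt
      exact Subtype.ext (le_antisymm (dense s t hs ht hiff)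
        (dense t s ht hs (fun x hx => (hiff x hx).symm)))
    · rintro ⟨t, ht⟩
      obtain ⟨s, hs, hst⟩ := isOpen_induced_iff.mp ht
      exact ⟨⟨s, hs⟩, Subtype.ext hst⟩
end
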